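/- arXiv:2206.12135 — 2 statements merged into one kernel-verified Lean document; each statement's English description precedes it below -/
import Mathlib

section
/- Let τ be a vocabulary consisting of constant symbols a_1,…,a_ℓ with ℓ ≥ 1, nullary relation symbols Z_1,…,Z_{ℓ_Z}, unary relation symbols U_1,…,U_{ℓ_U}, and binary relation symbols R_1,…,R_{ℓ_R}, and let φ be a first-order sentence over τ. Let τ' be the vocabulary with constant symbols a_1,…,a_{ℓ−1}, nullary relation symbols Z_1,…,Z_{ℓ_Z} together with new nullary symbols S_1,…,S_{ℓ_U} and D_1,…,D_{ℓ_R}, unary relation symbols U_1,…,U_{ℓ_U} together with new unary symbols I_1,…,I_{ℓ_R} and O_1,…,O_{ℓ_R}, and the same binary relation symbols R_1,…,R_{ℓ_R}. Then there exists a single first-order sentence φ' over τ' such that f_φ(n) = f_{φ'}(n) for all n ∈ ℕ. -/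
open FirstOrder Language

/-- A purely relational language with relation symbols `Rel k` of arity `k`. -/
def relLang (Rel : ℕ → Type) : Language :=
  ⟨fun _ => Empty, Rel⟩

/-- A language with constant symbols indexed by `Fin ℓ`, relation symbols `Rel k`
of arity `k`, and no other non-logical symbols. -/
def cLang (ℓ : ℕ) (Rel : ℕ → Type) : Language :=
  ⟨fun k => match k with | 0 => Fin ℓ | _ + 1 => Empty, Rel⟩

/-- The `relLang Rel`-structure on `M` determined by an interpretation `S`
of the relation symbols. -/
def relLang.mkStructure {Rel : ℕ → Type} {M : Type}
    (S : ∀ k, Rel k → (Fin k → M) → Prop) : (relLang Rel).Structure M where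
  funMap := fun f _ => f.elim
  RelMap := fun {k} r v => S k r v

/-- The `cLang ℓ Rel`-structure on `M` determined by an interpretation `c` of the
constant symbols and an interpretation `S` of the relation symbols. -/
def cLang.mkStructure {ℓ : ℕ} {Rel : ℕ → Type} {M : Type}
    (c : Fin ℓ → M) (S : ∀ k, Rel k → (Fin k → M) → Prop) :
    (cLang ℓ Rel).Structure M where
  funMap := fun {k} f _ =>
    match k, f with
    | 0, i => c i
  RelMap := fun {k} r v => S k r v

/-- `Sp_φ(n)`: the number of interpretations of the relation symbols on `[n]`
satisfying the sentence `φ` of a relational language. -/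
noncomputable def spCount {Rel : ℕ → Type} (φ : (relLang Rel).Sentence) (n : ℕ) : ℕ :=
  Nat.card { S : ∀ k, Rel k → (Fin k → Fin n) → Prop //
    letI := relLang.mkStructure S
    Fin n ⊨ φ }

/-- `f_φ(n)`: the number of interpretations of the relation symbols on `[n + ℓ]`
satisfying `φ`, where the `i`-th (hard-wired) constant is interpreted as `n + i`. -/
noncomputable def fCount (ℓ : ℕ) {Rel : ℕ → Type} (φ : (cLang ℓ Rel).Sentence) (n : ℕ) : ℕ :=
  Nat.card { S : ∀ k, Rel k → (Fin k → Fin (n + ℓ)) → Prop //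
    letI := cLang.mkStructure (fun i => Fin.natAdd n i) S
    Fin (n + ℓ) ⊨ φ }

/-- Relation symbols: `z` nullary, `u` unary, `b` binary, none of higher arity. -/
def rels012 (z u b : ℕ) : ℕ → Type := fun k =>
  match k with
  | 0 => Fin z
  | 1 => Fin u
  | 2 => Fin b
  | _ => Empty

/-!
Identify the universe `[n + ℓ + 1]` with `Option [n + ℓ]`, the removed constant `a` being
`none`.  An interpretation of the relation symbols on `Option M` carries exactly the same
information as an interpretation of the enlarged vocabulary on `M`: a relation restricted to
the tuples in which some arguments are `a` becomes a relation of lower arity on `M`.  Dually, a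
formula is translated by recording, for each variable, whether it ranges over `M` or stands for
`a`: a quantifier over `Option M` becomes the conjunction of the instance `a` and a quantifier
over `M`, and an atom becomes the atom of the enlarged vocabulary selected by which of its
arguments denote `a`.  The translation preserves truth, so the bijection of interpretations
restricts to a bijection of models.
-/

open Structure

lemma Fin.exists_eq_vecCons₁ {α : Type} (v : Fin 1 → α) : ∃ x, v = ![x] :=
  ⟨v 0, by ext i; fin_cases i; rfl⟩

lemma Fin.exists_eq_vecCons₂ {α : Type} (v : Fin 2 → α) : ∃ x y, v = ![x, y] :=
  ⟨v 0, v 1, by ext i; fin_cases i <;> rfl⟩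

@[simp]
lemma Matrix.comp_vecCons {α β : Type} (g : α → β) (a : α) {n : ℕ} (v : Fin n → α) :
    g ∘ Matrix.vecCons a v = Matrix.vecCons (g a) (g ∘ v) :=
  Fin.comp_cons g a v

@[simp]
lemma Matrix.comp_vecEmpty {α β : Type} (g : α → β) : g ∘ ![] = ![] :=
  Subsingleton.elim _ _

lemma FirstOrder.Language.Sentence.realize_iff_realize_boundedFormula {L : Language} {M : Type} [L.Structure M]
    (φ : L.Sentence) (v : Empty → M) (xs : Fin 0 → M) :
    M ⊨ φ ↔ BoundedFormula.Realize φ v xs := by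
  rw [Subsingleton.elim v default, Subsingleton.elim xs default]
  rfl

abbrev Interp (Rel : ℕ → Type) (M : Type) : Type := ∀ k, Rel k → (Fin k → M) → Prop

section Structures

variable {ℓ : ℕ} {Rel : ℕ → Type} {M M' : Type}

@[simp]
lemma cLang.funMap_mkStructure (c : Fin ℓ → M) (S : Interp Rel M) (i : Fin ℓ)
    (x : Fin 0 → M) :
    @funMap (cLang ℓ Rel) M (cLang.mkStructure c S) 0 i x = c i :=
  rfl

@[simp]
lemma cLang.realize_boundedFormula_rel (c : Fin ℓ → M) (S : Interp Rel M) {α : Type}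
    {n m : ℕ} (r : Rel n) (ts : Fin n → (cLang ℓ Rel).Term (α ⊕ Fin m)) (v : α → M)
    (xs : Fin m → M) :
    letI := cLang.mkStructure c S
    (Relations.boundedFormula (L := cLang ℓ Rel) r ts).Realize v xs ↔
      S n r fun i => (ts i).realize (Sum.elim v xs) :=
  Iff.rfl

noncomputable def numModels (c : Fin ℓ → M) (φ : (cLang ℓ Rel).Sentence) : ℕ :=
  Nat.card { S : Interp Rel M // letI := cLang.mkStructure c S; M ⊨ φ }

lemma fCount_eq_numModels (n : ℕ) (φ : (cLang ℓ Rel).Sentence) :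
    fCount ℓ φ n = numModels (Fin.natAdd n) φ :=
  rfl

def Interp.congr (e : M ≃ M') : Interp Rel M ≃ Interp Rel M' where
  toFun S k r v := S k r (e.symm ∘ v)
  invFun S k r v := S k r (e ∘ v)
  left_inv S := by funext k r v; simp [Function.comp_def]
  right_inv S := by funext k r v; simp [Function.comp_def]

lemma cLang.realize_congr (e : M ≃ M') (c : Fin ℓ → M) (S : Interp Rel M)
    (φ : (cLang ℓ Rel).Sentence) :
    (letI := cLang.mkStructure c S; M ⊨ φ) ↔
      (letI := cLang.mkStructure (e ∘ c) (Interp.congr e S); M' ⊨ φ) := by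
  let _ := cLang.mkStructure c S
  let _ := cLang.mkStructure (e ∘ c) (Interp.congr e S)
  let g : M ≃[cLang ℓ Rel] M' :=
    { e with
      map_fun' := fun {k} f x => by
        match k, f with
        | 0, i => rfl
      map_rel' := fun r x => by
        change S _ r (e.symm ∘ e ∘ x) ↔ S _ r x
        simp [Function.comp_def] }
  exact StrongHomClass.realize_sentence g φ

lemma numModels_congr (e : M ≃ M') (c : Fin ℓ → M) (φ : (cLang ℓ Rel).Sentence) :
    numModels c φ = numModels (e ∘ c) φ :=
  Nat.card_congr ((Interp.congr e).subtypeEquiv fun S => cLang.realize_congr e c S φ)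

end Structures

section Encoding

variable {M : Type} {z u b : ℕ}

/- The symbols of the enlarged vocabulary, in the order in which they are numbered: the new
nullary `S_i` and `D_j` stand for `U_i(a)` and `R_j(a, a)`, the new unary `I_j(x)` and `O_j(x)`
for `R_j(x, a)` and `R_j(a, x)`, where `a` is the removed constant; the binary symbols are
shared. -/

def nullarySym (z u b : ℕ) :
    Fin z ⊕ Fin u ⊕ Fin b ≃ rels012 (z + (u + b)) (u + 2 * b) b 0 :=
  (Equiv.sumCongr (.refl _) finSumFinEquiv).trans finSumFinEquiv

def unarySym (z u b : ℕ) :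
    Fin u ⊕ Fin b ⊕ Fin b ≃ rels012 (z + (u + b)) (u + 2 * b) b 1 :=
  (Equiv.sumCongr (.refl _) (finSumFinEquiv.trans (finCongr (two_mul b).symm))).trans
    finSumFinEquiv

def binarySym (z u b : ℕ) : rels012 z u b 2 ≃ rels012 (z + (u + b)) (u + 2 * b) b 2 :=
  .refl (Fin b)

def encode (S : Interp (rels012 z u b) (Option M)) :
    Interp (rels012 (z + (u + b)) (u + 2 * b) b) M
  | 0, r, _ =>
    match (nullarySym z u b).symm r with
    | .inl r => S 0 r ![]
    | .inr (.inl r) => S 1 r ![none]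
    | .inr (.inr r) => S 2 r ![none, none]
  | 1, r, v =>
    match (unarySym z u b).symm r with
    | .inl r => S 1 r ![some (v 0)]
    | .inr (.inl r) => S 2 r ![some (v 0), none]
    | .inr (.inr r) => S 2 r ![none, some (v 0)]
  | 2, r, v => S 2 ((binarySym z u b).symm r) ![some (v 0), some (v 1)]
  | _ + 3, r, _ => (r : Empty).elim

def decode (T : Interp (rels012 (z + (u + b)) (u + 2 * b) b) M) :
    Interp (rels012 z u b) (Option M)
  | 0, r, _ => T 0 (nullarySym z u b (.inl r)) ![]
  | 1, r, v =>
    match v 0 with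
    | none => T 0 (nullarySym z u b (.inr (.inl r))) ![]
    | some x => T 1 (unarySym z u b (.inl r)) ![x]
  | 2, r, v =>
    match v 0, v 1 with
    | none, none => T 0 (nullarySym z u b (.inr (.inr r))) ![]
    | some x, none => T 1 (unarySym z u b (.inr (.inl r))) ![x]
    | none, some y => T 1 (unarySym z u b (.inr (.inr r))) ![y]
    | some x, some y => T 2 (binarySym z u b r) ![x, y]
  | _ + 3, r, _ => (r : Empty).elim

lemma decode_encode (S : Interp (rels012 z u b) (Option M)) : decode (encode S) = S := by
  funext k r v
  match k with
  | 0 => simp [decode, encode, Subsingleton.elim v ![] ]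
  | 1 =>
    obtain ⟨x, rfl⟩ := Fin.exists_eq_vecCons₁ v
    cases x <;> simp [decode, encode]
  | 2 =>
    obtain ⟨x, y, rfl⟩ := Fin.exists_eq_vecCons₂ v
    cases x <;> cases y <;> simp [decode, encode]
  | _ + 3 => exact (r : Empty).elim

lemma encode_decode (T : Interp (rels012 (z + (u + b)) (u + 2 * b) b) M) :
    encode (decode T) = T := by
  funext k r v
  match k with
  | 0 =>
    obtain ⟨r, rfl⟩ := (nullarySym z u b).surjective r
    rcases r with r | r | r <;> simp [decode, encode, Subsingleton.elim v ![] ]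
  | 1 =>
    obtain ⟨r, rfl⟩ := (unarySym z u b).surjective r
    obtain ⟨x, rfl⟩ := Fin.exists_eq_vecCons₁ v
    rcases r with r | r | r <;> simp [decode, encode]
  | 2 =>
    obtain ⟨r, rfl⟩ := (binarySym z u b).surjective r
    obtain ⟨x, y, rfl⟩ := Fin.exists_eq_vecCons₂ v
    simp [decode, encode]
  | _ + 3 => exact (r : Empty).elim

def encodeEquiv :
    Interp (rels012 z u b) (Option M) ≃ Interp (rels012 (z + (u + b)) (u + 2 * b) b) M :=
  ⟨encode, decode, decode_encode, encode_decode⟩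

end Encoding

section Translation

variable {M : Type} {ℓ : ℕ}

def extendConsts {α : Type} (c : Fin ℓ → α) : Fin (ℓ + 1) → Option α :=
  Fin.lastCases none fun i => some (c i)

@[simp]
lemma extendConsts_last {α : Type} (c : Fin ℓ → α) : extendConsts c (Fin.last ℓ) = none :=
  Fin.lastCases_last

@[simp]
lemma extendConsts_castSucc {α : Type} (c : Fin ℓ → α) (i : Fin ℓ) :
    extendConsts c i.castSucc = some (c i) :=
  Fin.lastCases_castSucc i

section Terms

variable {Rel Rel' : ℕ → Type}

def elimConstTerm {k m : ℕ} (f : Fin k → Option (Fin m)) :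
    (cLang (ℓ + 1) Rel).Term (Empty ⊕ Fin k) →
      Option ((cLang ℓ Rel').Term (Empty ⊕ Fin m))
  | .var (.inl e) => e.elim
  | .var (.inr i) => (f i).map fun j => .var (.inr j)
  | .func (l := 0) c _ => extendConsts (fun i => Constants.term (L := cLang ℓ Rel') i) c
  | .func (l := _ + 1) F _ => (F : Empty).elim

lemma realize_elimConstTerm (c : Fin ℓ → M) (S : Interp Rel (Option M)) (T : Interp Rel' M)
    {k m : ℕ} (f : Fin k → Option (Fin m)) (w : Fin m → M)
    (t : (cLang (ℓ + 1) Rel).Term (Empty ⊕ Fin k)) :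
    letI := cLang.mkStructure (extendConsts c) S
    letI := cLang.mkStructure c T
    (elimConstTerm (Rel' := Rel') f t).map (Term.realize (Sum.elim default w)) =
      t.realize (Sum.elim default fun i => (f i).map w) := by
  match t with
  | .var (.inl e) => exact e.elim
  | .var (.inr i) => simp [elimConstTerm, Term.realize, Option.map_map, Function.comp_def]
  | .func (l := 0) c _ =>
    change Fin (ℓ + 1) at c
    induction c using Fin.lastCases <;> simp [elimConstTerm, Term.realize, Constants.term]
  | .func (l := _ + 1) F _ => exact (F : Empty).elim

end Terms

def eqAtom {L : Language} {α : Type} {m : ℕ} :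
    Option (L.Term (α ⊕ Fin m)) → Option (L.Term (α ⊕ Fin m)) → L.BoundedFormula α m
  | none, none => ⊤
  | some s, some t => s.bdEqual t
  | _, _ => ⊥

lemma realize_eqAtom {L : Language} [L.Structure M] {α : Type} {m : ℕ}
    (o o' : Option (L.Term (α ⊕ Fin m))) (v : α → M) (xs : Fin m → M) :
    (eqAtom o o').Realize v xs ↔
      o.map (Term.realize (Sum.elim v xs)) = o'.map (Term.realize (Sum.elim v xs)) := by
  cases o <;> cases o' <;> simp [eqAtom]

variable {z u b : ℕ}

def relAtom {α : Type} {m : ℕ} : ∀ {l : ℕ}, rels012 z u b l →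
    (Fin l → Option ((cLang ℓ (rels012 (z + (u + b)) (u + 2 * b) b)).Term (α ⊕ Fin m))) →
      (cLang ℓ (rels012 (z + (u + b)) (u + 2 * b) b)).BoundedFormula α m
  | 0, r, _ => Relations.boundedFormula (n := 0) (nullarySym z u b (.inl r)) ![]
  | 1, r, ts =>
    match ts 0 with
    | none => Relations.boundedFormula (n := 0) (nullarySym z u b (.inr (.inl r))) ![]
    | some t => Relations.boundedFormula₁ (unarySym z u b (.inl r)) t
  | 2, r, ts =>
    match ts 0, ts 1 with
    | none, none => Relations.boundedFormula (n := 0) (nullarySym z u b (.inr (.inr r))) ![]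
    | some t, none => Relations.boundedFormula₁ (unarySym z u b (.inr (.inl r))) t
    | none, some t => Relations.boundedFormula₁ (unarySym z u b (.inr (.inr r))) t
    | some t, some t' => Relations.boundedFormula₂ (binarySym z u b r) t t'
  | _ + 3, r, _ => (r : Empty).elim

lemma realize_relAtom (c : Fin ℓ → M) (S : Interp (rels012 z u b) (Option M)) {α : Type}
    {m l : ℕ} (r : rels012 z u b l)
    (ts : Fin l → Option ((cLang ℓ (rels012 (z + (u + b)) (u + 2 * b) b)).Term (α ⊕ Fin m)))
    (v : α → M) (xs : Fin m → M) :
    letI := cLang.mkStructure c (encode S)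
    (relAtom r ts).Realize v xs ↔ S l r (Option.map (Term.realize (Sum.elim v xs)) ∘ ts) := by
  match l with
  | 0 => simp [relAtom, encode, Subsingleton.elim ts ![] ]
  | 1 =>
    obtain ⟨t, rfl⟩ := Fin.exists_eq_vecCons₁ ts
    cases t <;> simp [relAtom, encode, Relations.boundedFormula₁]
  | 2 =>
    obtain ⟨t, t', rfl⟩ := Fin.exists_eq_vecCons₂ ts
    cases t <;> cases t' <;>
      simp [relAtom, encode, Relations.boundedFormula₁, Relations.boundedFormula₂]
  | _ + 3 => exact (r : Empty).elim

/- `f i = some j` sends the bound variable `i` of `ψ` to the variable `j` of the translation,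
`f i = none` means that `i` stands for the removed constant. -/
def elimConst : ∀ {k : ℕ}, (cLang (ℓ + 1) (rels012 z u b)).BoundedFormula Empty k →
    ∀ {m : ℕ}, (Fin k → Option (Fin m)) →
      (cLang ℓ (rels012 (z + (u + b)) (u + 2 * b) b)).BoundedFormula Empty m
  | _, .falsum, _, _ => ⊥
  | _, .equal t₁ t₂, _, f => eqAtom (elimConstTerm f t₁) (elimConstTerm f t₂)
  | _, .rel r ts, _, f => relAtom r fun i => elimConstTerm f (ts i)
  | _, .imp ψ₁ ψ₂, _, f => (elimConst ψ₁ f).imp (elimConst ψ₂ f)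
  | _, .all ψ, _, f =>
    elimConst ψ (Fin.snoc f none) ⊓
      ∀' elimConst ψ (Fin.snoc (fun i => (f i).map Fin.castSucc) (some (Fin.last _)))

lemma map_snoc_none {k m : ℕ} (f : Fin k → Option (Fin m)) (w : Fin m → M) :
    (fun i => (Fin.snoc (α := fun _ => Option (Fin m)) f none i).map w) =
      Fin.snoc (fun i => (f i).map w) none := by
  ext i : 1
  induction i using Fin.lastCases <;> simp

lemma map_snoc_some_last {k m : ℕ} (f : Fin k → Option (Fin m)) (w : Fin m → M) (y : M) :
    (fun i => (Fin.snoc (α := fun _ => Option (Fin (m + 1))) (fun i => (f i).map Fin.castSucc)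
        (some (Fin.last m)) i).map (Fin.snoc w y)) =
      Fin.snoc (fun i => (f i).map w) (some y) := by
  ext i : 1
  induction i using Fin.lastCases <;> simp [Option.map_map, Function.comp_def]

lemma realize_elimConst (c : Fin ℓ → M) (S : Interp (rels012 z u b) (Option M)) {k : ℕ}
    (ψ : (cLang (ℓ + 1) (rels012 z u b)).BoundedFormula Empty k) {m : ℕ}
    (f : Fin k → Option (Fin m)) (w : Fin m → M) :
    letI := cLang.mkStructure (extendConsts c) S
    letI := cLang.mkStructure c (encode S)
    (elimConst ψ f).Realize default w ↔ ψ.Realize default fun i => (f i).map w := by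
  let _ := cLang.mkStructure (extendConsts c) S
  let _ := cLang.mkStructure c (encode S)
  induction ψ generalizing m with
  | falsum => simp [elimConst, BoundedFormula.Realize]
  | equal t₁ t₂ =>
    simp [elimConst, BoundedFormula.Realize, realize_eqAtom, realize_elimConstTerm c S (encode S)]
  | rel r ts =>
    refine (realize_relAtom c S r _ default w).trans ?_
    simp only [Function.comp_def, realize_elimConstTerm c S (encode S)]
    rfl
  | imp ψ₁ ψ₂ ih₁ ih₂ => simp [elimConst, BoundedFormula.Realize, ih₁, ih₂]
  | all ψ ih =>
    simp [elimConst, BoundedFormula.Realize, ih, Option.forall, map_snoc_none, map_snoc_some_last]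

lemma numModels_elimConst (c : Fin ℓ → M) (φ : (cLang (ℓ + 1) (rels012 z u b)).Sentence) :
    numModels (extendConsts c) φ = numModels c (elimConst φ finZeroElim) := by
  refine Nat.card_congr (encodeEquiv.subtypeEquiv fun S => ?_)
  let _ := cLang.mkStructure (extendConsts c) S
  let _ := cLang.mkStructure c (encode S)
  exact (Sentence.realize_iff_realize_boundedFormula φ _ _).trans
    ((realize_elimConst c S φ finZeroElim default).symm.trans
      (Sentence.realize_iff_realize_boundedFormula _ _ _).symm)

end Translation

lemma finSuccEquivLast_comp_natAdd (n ℓ : ℕ) :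
    (finSuccEquivLast : Fin (n + ℓ + 1) ≃ _) ∘ Fin.natAdd n =
      extendConsts (Fin.natAdd n) := by
  ext i : 1
  induction i using Fin.lastCases with
  | last => simp [Fin.natAdd_last]
  | cast i =>
    rw [Function.comp_apply, extendConsts_castSucc, Fin.natAdd_castSucc]
    exact finSuccEquivLast_castSucc _

/-- **Removing a single constant in a many-one manner.**
Let τ have ℓ+1 constant symbols, z nullary, u unary and b binary relation symbols, and
let φ be a first-order sentence over τ.  Let τ' have the constant symbols a₁,…,a_ℓ, the
z original nullary symbols together with u + b new nullary symbols (the S's and the D's),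
the u original unary symbols together with 2b new unary symbols (the I's and the O's),
and the same b binary symbols.  Then there is a single first-order sentence φ' over τ'
with f_φ(n) = f_{φ'}(n) for all n. -/
theorem remove_single_constant_many_one (ℓ z u b : ℕ)
    (φ : (cLang (ℓ + 1) (rels012 z u b)).Sentence) :
    ∃ φ' : (cLang ℓ (rels012 (z + (u + b)) (u + 2 * b) b)).Sentence,
      ∀ n : ℕ, fCount (ℓ + 1) φ n = fCount ℓ φ' n := by
  refine ⟨elimConst φ finZeroElim, fun n => ?_⟩
  rw [fCount_eq_numModels, fCount_eq_numModels, numModels_congr finSuccEquivLast,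
    finSuccEquivLast_comp_natAdd, numModels_elimConst]
end

section
/- Let τ be a vocabulary consisting of finitely many constant symbols a_1,…,a_ℓ and finitely many relation symbols R̄ of arbitrary arities, and let φ be a first-order sentence over τ. Then there exists a vocabulary τ' with no constant symbols whose relation symbols R̄' contain R̄, have the same maximum arity as R̄, and include no new relation symbols of that maximum arity, and a single first-order sentence φ' over τ', such that f_φ(n) = Sp_{φ'}(n) for all n ∈ ℕ. -/
open FirstOrder Language

/-- Relation symbols indexed by ι with arity function ρ : the symbols of arity k are
those i : ι with ρ i = k. -/
def arels {ι : Type} (ρ : ι → ℕ) : ℕ → Type := fun k => { i : ι // ρ i = k }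

/-!
Identify `Fin (n + ℓ)` with `Fin n ⊕ Fin ℓ`, the hard-wired constants forming the right summand.
A tuple in `Fin (n + ℓ)` is then the same thing as a pattern `σ`, recording which positions hold
which constant, together with a tuple in `Fin n` indexed by the remaining positions. Hence an
interpretation of a symbol `R` of arity `k` on `[n + ℓ]` is the same thing as an interpretation on
`[n]` of one symbol `R_σ` per pattern `σ`, whose arity is the number of constant-free positions of
`σ`; only the constant-free pattern keeps the full arity `k`. Translating `φ` accordingly (each
`∀ x` becomes `∀ x` over `[n]` together with a conjunction over the `ℓ` constants, each atom the
matching `R_σ`-atom, equalities involving constants are decided outright) gives a sentence `φ'`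
whose models on `[n]` correspond bijectively to the models of `φ` on `[n + ℓ]`.
-/

noncomputable section

namespace ConstantElimination

open Structure

section Pattern

variable {κ A A' B : Type*}

def pattern (u : κ → A ⊕ B) (j : κ) : Option B := (u j).getRight?

def patternFiberEquiv (σ : κ → Option B) :
    {u : κ → A ⊕ B // pattern u = σ} ≃ ({j // σ j = none} → A) where
  toFun u j := (u.1 j.1).getLeft <| Sum.getRight?_eq_none_iff.mp <| (congrFun u.2 j.1).trans j.2
  invFun g := ⟨fun j => if h : σ j = none then .inl (g ⟨j, h⟩)
      else .inr ((σ j).get (Option.ne_none_iff_isSome.mp h)), by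
    funext j
    by_cases h : σ j = none <;> simp [pattern, h]⟩
  left_inv u := by
    obtain ⟨u, rfl⟩ := u
    ext j : 2
    cases hu : u j <;> simp [pattern, hu]
  right_inv g := by
    funext j
    simp [j.2]

def splitEquiv : (κ → A ⊕ B) ≃ Σ σ : κ → Option B, ({j // σ j = none} → A) :=
  (Equiv.sigmaFiberEquiv pattern).symm.trans (Equiv.sigmaCongrRight patternFiberEquiv)

theorem splitEquiv_symm_apply (σ : κ → Option B) (g : {j // σ j = none} → A) (j : κ) :
    splitEquiv.symm ⟨σ, g⟩ j = if h : σ j = none then .inl (g ⟨j, h⟩)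
      else .inr ((σ j).get (Option.ne_none_iff_isSome.mp h)) :=
  rfl

theorem splitEquiv_symm_comp (σ : κ → Option B) (g : {j // σ j = none} → A) (f : A → A') :
    splitEquiv.symm ⟨σ, f ∘ g⟩ = Sum.map f id ∘ splitEquiv.symm ⟨σ, g⟩ := by
  funext j
  by_cases h : σ j = none <;> simp [splitEquiv_symm_apply, h]

variable [Fintype κ]

def arity (σ : κ → Option B) : ℕ := Fintype.card {j // σ j = none}

theorem arity_const_none : arity (fun _ : κ => (none : Option B)) = Fintype.card κ := by
  simp [arity]

theorem arity_lt {σ : κ → Option B} (hσ : σ ≠ fun _ => none) : arity σ < Fintype.card κ := by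
  obtain ⟨j, hj⟩ := Function.ne_iff.mp hσ
  exact Fintype.card_subtype_lt hj

end Pattern

section Vocabulary

variable {ι : Type} (ρ : ι → ℕ) (ℓ : ℕ)

abbrev PinnedSymbol : Type := Σ i : ι, (Fin (ρ i) → Option (Fin ℓ))

def pinnedArity (p : PinnedSymbol ρ ℓ) : ℕ := arity p.2

def unpinned : ι ↪ PinnedSymbol ρ ℓ :=
  ⟨fun i => ⟨i, fun _ => none⟩, fun _ _ h => congrArg Sigma.fst h⟩

variable {ρ ℓ}

theorem pinnedArity_unpinned (i : ι) : pinnedArity ρ ℓ (unpinned ρ ℓ i) = ρ i :=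
  arity_const_none.trans (Fintype.card_fin _)

theorem exists_pinnedArity_lt {p : PinnedSymbol ρ ℓ} (hp : p ∉ Set.range (unpinned ρ ℓ)) :
    ∃ i, pinnedArity ρ ℓ p < ρ i := by
  obtain ⟨i, σ⟩ := p
  exact ⟨i, (arity_lt fun h => hp ⟨i, (congrArg (Sigma.mk i) h).symm⟩).trans_eq
    (Fintype.card_fin _)⟩

end Vocabulary

section Interpretation

variable {ι : Type}

def extendVal {α : Type*} {n ℓ : ℕ} (w : α → Fin n) (x : α ⊕ Fin ℓ) : Fin (n + ℓ) :=
  finSumFinEquiv (Sum.map w id x)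

theorem extendVal_comp_sumMap {α β : Type*} {n ℓ : ℕ} (w : β → Fin n) (g : α → β) :
    extendVal (ℓ := ℓ) w ∘ Sum.map g id = extendVal (w ∘ g) := by
  funext x
  cases x <;> rfl

def tupleEquiv (n ℓ k : ℕ) :
    (Σ σ : Fin k → Option (Fin ℓ), Fin (arity σ) → Fin n) ≃ (Fin k → Fin (n + ℓ)) :=
  (Equiv.sigmaCongrRight fun _ => (Fintype.equivFin _).symm.arrowCongr (Equiv.refl _)).trans <|
    splitEquiv.symm.trans <| (Equiv.refl _).arrowCongr finSumFinEquiv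

theorem tupleEquiv_split {α : Type*} {n ℓ k : ℕ} (u : Fin k → α ⊕ Fin ℓ) (w : α → Fin n) :
    tupleEquiv n ℓ k ⟨(splitEquiv u).1, w ∘ (splitEquiv u).2 ∘ (Fintype.equivFin _).symm⟩ =
      fun j => extendVal w (u j) := by
  set e := Fintype.equivFin {j // (splitEquiv u).1 j = none}
  have hcomp : (w ∘ (splitEquiv u).2 ∘ e.symm) ∘ e = w ∘ (splitEquiv u).2 := by
    funext x
    simp
  funext j
  show finSumFinEquiv (splitEquiv.symm ⟨_, (w ∘ (splitEquiv u).2 ∘ e.symm) ∘ e⟩ j) = _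
  rw [hcomp, splitEquiv_symm_comp, Sigma.eta, Equiv.symm_apply_apply]
  rfl

def arelsPiEquiv (ρ : ι → ℕ) (X : ℕ → Sort*) : (∀ k, arels ρ k → X k) ≃ ∀ i, X (ρ i) where
  toFun S i := S (ρ i) ⟨i, rfl⟩
  invFun T k r := r.2 ▸ T r.1
  left_inv S := by
    funext k ⟨i, hk⟩
    subst hk
    rfl
  right_inv _ := rfl

abbrev Interp (ρ : ι → ℕ) (M : Type) : Type := ∀ k, arels ρ k → (Fin k → M) → Prop

variable (ρ : ι → ℕ) (ℓ n : ℕ)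

def interpEquiv : Interp (pinnedArity ρ ℓ) (Fin n) ≃ Interp ρ (Fin (n + ℓ)) :=
  (arelsPiEquiv _ fun k => (Fin k → Fin n) → Prop).trans <| (Equiv.piCurry fun _ _ => _).trans <|
    (Equiv.piCongrRight fun i => (Equiv.piCurry fun _ _ => Prop).symm.trans <|
      (tupleEquiv n ℓ (ρ i)).arrowCongr (Equiv.refl Prop)).trans
    (arelsPiEquiv ρ fun k => (Fin k → Fin (n + ℓ)) → Prop).symm

variable {ρ ℓ n}

theorem interpEquiv_apply_tupleEquiv (S' : Interp (pinnedArity ρ ℓ) (Fin n)) (i : ι)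
    (σ : Fin (ρ i) → Option (Fin ℓ)) (h : Fin (arity σ) → Fin n) :
    interpEquiv ρ ℓ n S' (ρ i) ⟨i, rfl⟩ (tupleEquiv n ℓ (ρ i) ⟨σ, h⟩) ↔
      S' (pinnedArity ρ ℓ ⟨i, σ⟩) ⟨⟨i, σ⟩, rfl⟩ h := by
  show (fun x : Σ σ, Fin (arity σ) → Fin n => S' _ ⟨⟨i, x.1⟩, rfl⟩ x.2)
      ((tupleEquiv n ℓ (ρ i)).symm (tupleEquiv n ℓ (ρ i) ⟨σ, h⟩)) ↔ _
  rw [Equiv.symm_apply_apply]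

end Interpretation

section Translation

variable {ι : Type} {ρ : ι → ℕ} {ℓ n : ℕ}

def resolveTerm {R : ℕ → Type} {α : Type} {m : ℕ} (s : Fin m → α ⊕ Fin ℓ) :
    (cLang ℓ R).Term (Empty ⊕ Fin m) → α ⊕ Fin ℓ
  | .var (.inl e) => e.elim
  | .var (.inr j) => s j
  | .func (l := 0) c _ => .inr c
  | .func (l := _ + 1) f _ => f.elim

def equalFormula {L : Language} {α : Type} : α ⊕ Fin ℓ → α ⊕ Fin ℓ → L.Formula α
  | .inl a, .inl b => (Term.var a).equal (Term.var b)
  | .inr c, .inr d => if c = d then ⊤ else ⊥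
  | _, _ => ⊥

theorem realize_equalFormula {L : Language} [L.Structure (Fin n)] {α : Type}
    (x y : α ⊕ Fin ℓ) (w : α → Fin n) :
    (equalFormula x y : L.Formula α).Realize w ↔ extendVal w x = extendVal w y := by
  rw [extendVal, extendVal, EmbeddingLike.apply_eq_iff_eq]
  rcases x with a | c <;> rcases y with b | d
  · simp [equalFormula, Formula.Realize, Term.equal]
  · simp [equalFormula]
  · simp [equalFormula]
  · by_cases h : c = d <;> simp [equalFormula, h]

def pinnedAtom {α : Type} (i : ι) (u : Fin (ρ i) → α ⊕ Fin ℓ) :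
    (relLang (arels (pinnedArity ρ ℓ))).Formula α :=
  Relations.formula (⟨⟨i, (splitEquiv u).1⟩, rfl⟩ : arels (pinnedArity ρ ℓ) _)
    fun x => Term.var ((splitEquiv u).2 ((Fintype.equivFin _).symm x))

/-- `s j` says whether the bound variable `j` stands for a free variable of the translation
or for one of the constants. -/
def translate : ∀ {α : Type} {m : ℕ}, (Fin m → α ⊕ Fin ℓ) →
    (cLang ℓ (arels ρ)).BoundedFormula Empty m → (relLang (arels (pinnedArity ρ ℓ))).Formula α
  | _, _, _, .falsum => ⊥
  | _, _, s, .equal t₁ t₂ => equalFormula (resolveTerm s t₁) (resolveTerm s t₂)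
  | _, _, s, .rel r ts => pinnedAtom r.1 fun j => resolveTerm s (ts (Fin.cast r.2 j))
  | _, _, s, .imp f₁ f₂ => (translate s f₁).imp (translate s f₂)
  | _, _, s, .all f =>
    (translate (Fin.snoc (Sum.map .inl id ∘ s) (.inl (.inr ()))) f).iAlls Unit ⊓
      Formula.iInf fun c => translate (Fin.snoc s (.inr c)) f

variable [(cLang ℓ (arels ρ)).Structure (Fin (n + ℓ))]

theorem realize_resolveTerm
    (hconst : ∀ (c : Fin ℓ) xs, funMap (L := cLang ℓ (arels ρ)) (M := Fin (n + ℓ))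
      (n := 0) c xs = Fin.natAdd n c)
    {α : Type} {m : ℕ} (s : Fin m → α ⊕ Fin ℓ) (t : (cLang ℓ (arels ρ)).Term (Empty ⊕ Fin m))
    (v : Empty → Fin (n + ℓ)) (w : α → Fin n) :
    t.realize (Sum.elim v (extendVal w ∘ s)) = extendVal w (resolveTerm s t) :=
  match t with
  | .var (.inl e) => e.elim
  | .var (.inr _) => rfl
  | .func (l := 0) c _ => (hconst c _).trans (finSumFinEquiv_apply_right c).symm
  | .func (l := _ + 1) f _ => f.elim

variable [(relLang (arels (pinnedArity ρ ℓ))).Structure (Fin n)]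

theorem realize_pinnedAtom
    (hrel : ∀ i σ h, RelMap (L := cLang ℓ (arels ρ)) (⟨i, rfl⟩ : arels ρ (ρ i))
      (tupleEquiv n ℓ (ρ i) ⟨σ, h⟩) ↔
        RelMap (L := relLang (arels (pinnedArity ρ ℓ))) (⟨⟨i, σ⟩, rfl⟩ : arels _ _) h)
    {α : Type} (i : ι) (u : Fin (ρ i) → α ⊕ Fin ℓ) (w : α → Fin n) :
    (pinnedAtom i u).Realize w ↔
      RelMap (L := cLang ℓ (arels ρ)) (⟨i, rfl⟩ : arels ρ (ρ i)) fun j => extendVal w (u j) := by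
  have h := hrel i (splitEquiv u).1 (w ∘ (splitEquiv u).2 ∘ (Fintype.equivFin _).symm)
  rw [tupleEquiv_split] at h
  exact h.symm

theorem realize_translate
    (hconst : ∀ (c : Fin ℓ) xs, funMap (L := cLang ℓ (arels ρ)) (M := Fin (n + ℓ))
      (n := 0) c xs = Fin.natAdd n c)
    (hrel : ∀ i σ h, RelMap (L := cLang ℓ (arels ρ)) (⟨i, rfl⟩ : arels ρ (ρ i))
      (tupleEquiv n ℓ (ρ i) ⟨σ, h⟩) ↔
        RelMap (L := relLang (arels (pinnedArity ρ ℓ))) (⟨⟨i, σ⟩, rfl⟩ : arels _ _) h)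
    {α : Type} {m : ℕ} (s : Fin m → α ⊕ Fin ℓ) (f : (cLang ℓ (arels ρ)).BoundedFormula Empty m)
    (v : Empty → Fin (n + ℓ)) (w : α → Fin n) :
    f.Realize v (extendVal w ∘ s) ↔ (translate s f).Realize w := by
  induction f generalizing α with
  | falsum => exact Iff.rfl
  | equal t₁ t₂ =>
    simp only [BoundedFormula.Realize, realize_resolveTerm hconst, translate, realize_equalFormula]
  | rel r ts =>
    obtain ⟨i, rfl⟩ := r
    simp only [translate]
    rw [realize_pinnedAtom hrel]
    simp only [BoundedFormula.Realize, realize_resolveTerm hconst]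
    rfl
  | imp f₁ f₂ ih₁ ih₂ =>
    rw [translate, Formula.realize_imp, ← ih₁, ← ih₂]
    rfl
  | all f ih =>
    rw [translate, Formula.realize_inf, Formula.realize_iAlls, Formula.realize_iInf,
      BoundedFormula.realize_all, finSumFinEquiv.symm.forall_congr_left, Sum.forall,
      (Equiv.funUnique Unit (Fin n)).forall_congr_left]
    refine and_congr (forall_congr' fun a => ?_) (forall_congr' fun c => ?_)
    · rw [← ih, Fin.comp_snoc, ← Function.comp_assoc, extendVal_comp_sumMap]
      rfl
    · rw [← ih, Fin.comp_snoc]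
      rfl

end Translation

section Counting

variable {ι : Type} {ρ : ι → ℕ} {ℓ : ℕ}

def translateSentence (φ : (cLang ℓ (arels ρ)).Sentence) :
    (relLang (arels (pinnedArity ρ ℓ))).Sentence :=
  translate (Fin.elim0 : Fin 0 → Empty ⊕ Fin ℓ) φ

theorem realize_translateSentence {n : ℕ} (S' : Interp (pinnedArity ρ ℓ) (Fin n))
    (φ : (cLang ℓ (arels ρ)).Sentence) :
    (letI := relLang.mkStructure S'; Fin n ⊨ translateSentence φ) ↔
      (letI := cLang.mkStructure (fun i => Fin.natAdd n i) (interpEquiv ρ ℓ n S')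
       Fin (n + ℓ) ⊨ φ) := by
  let := cLang.mkStructure (fun i => Fin.natAdd n i) (interpEquiv ρ ℓ n S')
  let := relLang.mkStructure S'
  have h := realize_translate (fun _ _ => rfl) (interpEquiv_apply_tupleEquiv S') Fin.elim0 φ
    default (default : Empty → Fin n)
  rw [Subsingleton.elim (extendVal default ∘ Fin.elim0) default] at h
  exact h.symm

theorem fCount_eq_spCount_translateSentence (φ : (cLang ℓ (arels ρ)).Sentence) (n : ℕ) :
    fCount ℓ φ n = spCount (translateSentence φ) n :=
  Nat.card_congr (Equiv.subtypeEquiv (interpEquiv ρ ℓ n)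
    fun S' => realize_translateSentence S' φ).symm

end Counting

end ConstantElimination

end

open ConstantElimination in
/-- **Many-one reduction allowing higher arity.**
For a vocabulary τ with ℓ constant symbols and finitely many relation symbols of
arbitrary arities (indexed by the finite type ι, with arities ρ), and a first-order
sentence φ over τ, there is a relational vocabulary τ' (no constants) whose relation
symbols ι' contain ι (arities preserved), where every new symbol has arity strictly
smaller than the arity of some original symbol (so τ' has the same maximum arity as τ
and no new symbols of maximum arity), and a single first-order sentence φ' over τ'
such that f_φ(n) = Sp_{φ'}(n) for all n. -/
theorem many_one_reduction_higher_arity (ι : Type) [Fintype ι] (ρ : ι → ℕ) (ℓ : ℕ)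
    (φ : (cLang ℓ (arels ρ)).Sentence) :
    ∃ (ι' : Type) (_ : Fintype ι') (ρ' : ι' → ℕ) (e : ι ↪ ι'),
      (∀ i : ι, ρ' (e i) = ρ i) ∧
      (∀ j : ι', j ∉ Set.range e → ∃ i : ι, ρ' j < ρ i) ∧
      ∃ φ' : (relLang (arels ρ')).Sentence,
        ∀ n : ℕ, fCount ℓ φ n = spCount φ' n :=
  ⟨PinnedSymbol ρ ℓ, inferInstance, pinnedArity ρ ℓ, unpinned ρ ℓ, pinnedArity_unpinned,
    fun _ => exists_pinnedArity_lt, translateSentence φ, fCount_eq_spCount_translateSentence φ⟩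
end
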